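/- arXiv:2510.24286 — 9 statements merged into one kernel-verified Lean document; each statement's English description precedes it below -/
import Mathlib

section
/- Under Assumption (A), for every i ∈ {1,…,n−1} the function ℓ_i is strictly increasing on ℝ; in particular, for all real numbers w < w′ one has ℓ_i(w) < ℓ_i(w′). -/
/-- Critical half squared speed: ŵ_i = (1/2)·(P_max/(M·g·μ·cos α_i))². -/
noncomputable def wHat (M g μ Pmax : ℝ) (α : ℕ → ℝ) (i : ℕ) : ℝ :=
  (1/2) * (Pmax / (M * g * μ * Real.cos (α i)))^2

/-- The function ℓ_i. -/
noncomputable def ell (h γ M g μ Pmax : ℝ) (α : ℕ → ℝ) (i : ℕ) (w : ℝ) : ℝ :=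
  if w ≤ wHat M g μ Pmax α i then (1 - h*γ)*w + h*(g*μ*Real.cos (α i))
  else (1 - h*γ)*w + h*(Pmax/(M*Real.sqrt (2*w)))

/-- Assumption (A). -/
def AssumptionA (n : ℕ) (h γ M g μ Pmax : ℝ) (α : ℕ → ℝ) : Prop :=
  ∀ i, 1 ≤ i → i ≤ n - 1 →
    0 ≤ 1 - h*γ - h*(Pmax/(M*(2*wHat M g μ Pmax α i) ^ ((3:ℝ)/2)))

lemma key_alg (h γ M Pmax s0 sa sb a b : ℝ)
    (hh : 0 < h) (hM : 0 < M) (hP : 0 < Pmax) (hK : 0 < 1 - h * γ)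
    (hs0 : 0 < s0) (h0a : s0 ≤ sa) (hsab : sa < sb)
    (ha2 : sa^2 = 2*a) (hb2 : sb^2 = 2*b)
    (hA : h * Pmax ≤ (1 - h*γ) * (M * s0^3)) :
    (1 - h*γ)*a + h*(Pmax/(M*sa)) < (1 - h*γ)*b + h*(Pmax/(M*sb)) := by
  have hsa : 0 < sa := lt_of_lt_of_le hs0 h0a
  have hsb : 0 < sb := lt_trans hsa hsab
  have hden : 0 < M * sa * sb := by positivity
  have e1 : (1 - h*γ)*a + h*(Pmax/(M*sa))
      = ((1 - h*γ)*a*(M*sa*sb) + h*Pmax*sb) / (M*sa*sb) := by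
    field_simp
  have e2 : (1 - h*γ)*b + h*(Pmax/(M*sb))
      = ((1 - h*γ)*b*(M*sa*sb) + h*Pmax*sa) / (M*sa*sb) := by
    field_simp
  rw [e1, e2, div_lt_div_iff₀ hden hden]
  have hba : 0 < sb - sa := by linarith
  have hs0b : s0 < sb := lt_of_le_of_lt h0a hsab
  have hss : s0 * s0 < sa * sb := by nlinarith
  have hsum : 2*s0 < sa + sb := by linarith
  have hcube : 2 * s0^3 < sa * sb * (sa + sb) := by
    nlinarith [mul_lt_mul'' hss hsum (by positivity) (by positivity)]
  have hKMpos : 0 < (1 - h*γ) * M := mul_pos hK hM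
  have hmain : 2*(h*Pmax) < (1 - h*γ)*M*(sa*sb*(sa+sb)) := by
    nlinarith [mul_lt_mul_of_pos_left hcube hKMpos]
  have hid : (1 - h*γ)*M*(sa*sb*(sa+sb))*(sb-sa)
      = ((1 - h*γ)*b*(M*sa*sb) + h*Pmax*sa)*2
        - ((1 - h*γ)*a*(M*sa*sb) + h*Pmax*sb)*2 + 2*(h*Pmax)*(sb-sa) := by
    linear_combination ((1-h*γ)*M*sa*sb)*hb2 - ((1-h*γ)*M*sa*sb)*ha2
  have hnum : (1 - h*γ)*a*(M*sa*sb) + h*Pmax*sb <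
      (1 - h*γ)*b*(M*sa*sb) + h*Pmax*sa := by
    have h3 := mul_lt_mul_of_pos_right hmain hba
    linarith [hid]
  exact mul_lt_mul_of_pos_right hnum hden

lemma key_branch2 (h γ M Pmax w0 a b : ℝ)
    (hh : 0 < h) (hM : 0 < M) (hP : 0 < Pmax) (hhγ : h * γ < 1)
    (hw0 : 0 < w0)
    (hA : h * Pmax ≤ (1 - h*γ) * (M * (Real.sqrt (2*w0))^3))
    (ha : w0 ≤ a) (hab : a < b) :
    (1 - h*γ)*a + h*(Pmax/(M*Real.sqrt (2*a))) <
      (1 - h*γ)*b + h*(Pmax/(M*Real.sqrt (2*b))) := by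
  refine key_alg h γ M Pmax (Real.sqrt (2*w0)) (Real.sqrt (2*a)) (Real.sqrt (2*b)) a b
    hh hM hP (by linarith) (Real.sqrt_pos.mpr (by linarith))
    (Real.sqrt_le_sqrt (by linarith))
    (Real.sqrt_lt_sqrt (by linarith) (by linarith))
    (Real.sq_sqrt (by linarith)) (Real.sq_sqrt (by linarith)) hA

theorem stmt0 (n : ℕ) (hn : 2 ≤ n) (h M g μ γ c Pmax : ℝ)
    (hh : 0 < h) (hM : 0 < M) (hg : 0 < g) (hμ : 0 < μ)
    (hγ0 : 0 ≤ γ) (hhγ : h * γ < 1) (hc : 0 ≤ c) (hP : 0 < Pmax)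
    (α : ℕ → ℝ) (hcos : ∀ i, 1 ≤ i → i ≤ n - 1 → 0 < Real.cos (α i))
    (hA : AssumptionA n h γ M g μ Pmax α)
    (i : ℕ) (hi1 : 1 ≤ i) (hi2 : i ≤ n - 1) :
    StrictMono (ell h γ M g μ Pmax α i) ∧
      ∀ w w' : ℝ, w < w' → ell h γ M g μ Pmax α i w < ell h γ M g μ Pmax α i w' := by
  have hco := hcos i hi1 hi2
  set w0 := wHat M g μ Pmax α i with hw0def
  have hw0 : 0 < w0 := by
    rw [hw0def, wHat]
    have : 0 < Pmax / (M * g * μ * Real.cos (α i)) := by positivity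
    positivity
  -- rewrite assumption A
  have hAi := hA i hi1 hi2
  have hpow : (2*w0) ^ ((3:ℝ)/2) = (Real.sqrt (2*w0))^3 := by
    rw [Real.sqrt_eq_rpow, ← Real.rpow_natCast ((2*w0) ^ ((1:ℝ)/2)) 3,
      ← Real.rpow_mul (by linarith)]
    norm_num
  have hKM : 0 < M * (Real.sqrt (2*w0))^3 := by
    have : 0 < Real.sqrt (2*w0) := Real.sqrt_pos.mpr (by linarith)
    positivity
  have hA' : h * Pmax ≤ (1 - h*γ) * (M * (Real.sqrt (2*w0))^3) := by
    rw [hpow] at hAi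
    have h1 : h*(Pmax/(M*(Real.sqrt (2*w0))^3)) ≤ 1 - h*γ := by linarith
    calc h * Pmax = h*(Pmax/(M*(Real.sqrt (2*w0))^3)) * (M*(Real.sqrt (2*w0))^3) := by
          field_simp
      _ ≤ (1 - h*γ) * (M*(Real.sqrt (2*w0))^3) := mul_le_mul_of_nonneg_right h1 hKM.le
  -- value at the kink agrees between the two branches
  have hkink : Pmax/(M*Real.sqrt (2*w0)) = g*μ*Real.cos (α i) := by
    have hs : Real.sqrt (2*w0) = Pmax / (M * g * μ * Real.cos (α i)) := by
      rw [hw0def, wHat]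
      rw [show 2 * ((1:ℝ)/2 * (Pmax / (M * g * μ * Real.cos (α i)))^2)
          = (Pmax / (M * g * μ * Real.cos (α i)))^2 by ring]
      exact Real.sqrt_sq (by positivity)
    rw [hs]
    field_simp
  have main : ∀ w w' : ℝ, w < w' →
      ell h γ M g μ Pmax α i w < ell h γ M g μ Pmax α i w' := by
    intro w w' hww
    unfold ell
    rw [← hw0def]
    by_cases h1 : w ≤ w0
    · by_cases h2 : w' ≤ w0
      · simp only [if_pos h1, if_pos h2]
        nlinarith
      · simp only [if_pos h1, if_neg h2]
        push_neg at h2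
        have step : (1 - h*γ)*w0 + h*(Pmax/(M*Real.sqrt (2*w0))) <
            (1 - h*γ)*w' + h*(Pmax/(M*Real.sqrt (2*w'))) :=
          key_branch2 h γ M Pmax w0 w0 w' hh hM hP hhγ hw0 hA' le_rfl h2
        rw [hkink] at step
        nlinarith
    · push_neg at h1
      have h2 : ¬ w' ≤ w0 := by push_neg; linarith
      simp only [if_neg (not_le.mpr h1), if_neg h2]
      exact key_branch2 h γ M Pmax w0 w w' hh hM hP hhγ hw0 hA' (le_of_lt h1) hww
  exact ⟨fun w w' hww => main w w' hww, main⟩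
end

section
/- Assume Assumption (A). Define the vector l ∈ ℝⁿ recursively by l_n = w_fin and, for j = n−1 down to 1, l_j equal to the least element of the set {u ∈ ℝ : u ≥ w^min_j and ℓ_j(u) ≥ l_{j+1} + h·g·(sin α_j + c·cos α_j)} (this least element exists under Assumption (A)). Then every w ∈ X₁ satisfies w_j ≥ l_j for all j ∈ {1,…,n}. -/
/-- Combined maximum-force/maximum-power constraint (U_i) for all i ∈ {1,…,n−1}. -/
def constrU (n : ℕ) (h γ M g μ Pmax c : ℝ) (α : ℕ → ℝ) (w : ℕ → ℝ) : Prop :=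
  ∀ i, 1 ≤ i → i ≤ n - 1 →
    w (i+1) ≤ ell h γ M g μ Pmax α i (w i) - h*g*(Real.sin (α i) + c*Real.cos (α i))

/-- Minimum-force constraint (L_i) for all i ∈ {1,…,n−1}. -/
def constrL (n : ℕ) (h γ g μ c : ℝ) (α : ℕ → ℝ) (w : ℕ → ℝ) : Prop :=
  ∀ i, 1 ≤ i → i ≤ n - 1 →
    (1 - h*γ)*(w i) - h*g*(Real.sin (α i) + (c+μ)*Real.cos (α i)) ≤ w (i+1)

/-- Componentwise lower bounds on indices 1..n. -/
def lowerBd (n : ℕ) (wmin w : ℕ → ℝ) : Prop := ∀ i, 1 ≤ i → i ≤ n → wmin i ≤ w i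

/-- Componentwise upper bounds on indices 1..n. -/
def upperBd (n : ℕ) (wmax w : ℕ → ℝ) : Prop := ∀ i, 1 ≤ i → i ≤ n → w i ≤ wmax i

/-- Membership in the feasible set X. -/
def memX (n : ℕ) (h γ M g μ Pmax c : ℝ) (α wmin wmax : ℕ → ℝ) (w : ℕ → ℝ) : Prop :=
  constrU n h γ M g μ Pmax c α w ∧ constrL n h γ g μ c α w ∧
    lowerBd n wmin w ∧ upperBd n wmax w

theorem stmt2 (n : ℕ) (hn : 2 ≤ n) (h M g μ γ c Pmax : ℝ)
    (hh : 0 < h) (hM : 0 < M) (hg : 0 < g) (hμ : 0 < μ)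
    (hγ0 : 0 ≤ γ) (hhγ : h * γ < 1) (hc : 0 ≤ c) (hP : 0 < Pmax)
    (α : ℕ → ℝ) (hcos : ∀ i, 1 ≤ i → i ≤ n - 1 → 0 < Real.cos (α i))
    (hA : AssumptionA n h γ M g μ Pmax α)
    (win wfin : ℝ) (hwin : 0 ≤ win) (hwfin : 0 ≤ wfin)
    (wmin : ℕ → ℝ) (hwmin1 : wmin 1 = win) (hwminn : wmin n = wfin)
    (hwmin0 : ∀ i, 1 < i → i < n → wmin i = 0)
    -- the vector l, defined recursively via least elements
    (l : ℕ → ℝ) (hln : l n = wfin)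
    (hlrec : ∀ j, 1 ≤ j → j ≤ n - 1 →
      IsLeast {u : ℝ | wmin j ≤ u ∧
          l (j+1) + h*g*(Real.sin (α j) + c*Real.cos (α j)) ≤ ell h γ M g μ Pmax α j u}
        (l j)) :
    -- every w ∈ X₁ satisfies w_j ≥ l_j for all j ∈ {1,…,n}
    ∀ w : ℕ → ℝ, constrU n h γ M g μ Pmax c α w → lowerBd n wmin w →
      ∀ j, 1 ≤ j → j ≤ n → l j ≤ w j := by
  intro w hU hL
  have key : ∀ d j, 1 ≤ j → j ≤ n → n - j = d → l j ≤ w j := by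
    intro d
    induction d with
    | zero =>
      intro j hj1 hjn hd
      have hjn' : j = n := le_antisymm hjn (Nat.le_of_sub_eq_zero hd)
      subst hjn'
      rw [hln, ← hwminn]
      exact hL j hj1 hjn
    | succ d ih =>
      intro j hj1 hjn hd
      have hj' : j + 1 ≤ n := by omega
      have ihj : l (j+1) ≤ w (j+1) := ih (j+1) (by omega) hj' (by omega)
      have hjn1 : j ≤ n - 1 := by omega
      have hUj := hU j hj1 hjn1
      exact (hlrec j hj1 hjn1).2 ⟨hL j hj1 hjn, by linarith⟩
  intro j hj1 hjn
  exact key (n - j) j hj1 hjn rfl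
end

section
/- Assume Assumption (A). Define the vector u ∈ ℝⁿ recursively by u_1 = w_in and u_{j+1} = min{w^max_{j+1}, ℓ_j(u_j) − h·g·(sin α_j + c·cos α_j)} for j = 1,…,n−1. Then every w ∈ X₂ satisfies w_j ≤ u_j for all j ∈ {1,…,n}. -/
lemma pow_three_half (x : ℝ) (hx : 0 ≤ x) : x ^ ((3:ℝ)/2) = Real.sqrt x ^ 3 := by
  rw [show (3:ℝ)/2 = (1/2)*3 by ring, Real.rpow_mul hx, ← Real.sqrt_eq_rpow,
      ← Real.rpow_natCast (Real.sqrt x) 3]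
  norm_num

lemma key (K β r s t : ℝ) (hK : 0 < K) (hr : 0 < r) (hrs : r ≤ s) (hst : s ≤ t)
    (hC : K / r^3 ≤ β) : K/s - K/t ≤ β * (t^2/2 - s^2/2) := by
  have hs : 0 < s := lt_of_lt_of_le hr hrs
  have ht : 0 < t := lt_of_lt_of_le hs hst
  have hβ : 0 < β := lt_of_lt_of_le (by positivity) hC
  rw [div_le_iff₀ (by positivity)] at hC
  have h1 : K/s - K/t = K*(t-s)/(s*t) := by field_simp; try ring
  rw [h1, div_le_iff₀ (by positivity)]
  have h3 : r^3 ≤ s^3 := pow_le_pow_left₀ hr.le hrs 3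
  nlinarith [mul_nonneg (sub_nonneg.2 hst) hβ.le, mul_pos hs ht,
    mul_nonneg (mul_nonneg (sub_nonneg.2 hst) hβ.le) (sub_nonneg.2 h3),
    mul_nonneg (mul_nonneg (mul_nonneg (sub_nonneg.2 hst) hβ.le) hs.le) (sq_nonneg (t-s)),
    mul_nonneg (mul_nonneg (mul_nonneg (sub_nonneg.2 hst) hβ.le) hs.le) (mul_nonneg (sub_nonneg.2 hst) (by positivity : (0:ℝ) ≤ t + 2*s))]

lemma ell_mono (h M g μ γ Pmax : ℝ)
    (hh : 0 < h) (hM : 0 < M) (hg : 0 < g) (hμ : 0 < μ)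
    (hhγ : h * γ < 1) (hP : 0 < Pmax) (α : ℕ → ℝ) (i : ℕ)
    (hcos : 0 < Real.cos (α i))
    (hA : 0 ≤ 1 - h*γ - h*(Pmax/(M*(2*wHat M g μ Pmax α i) ^ ((3:ℝ)/2))))
    {a b : ℝ} (hab : a ≤ b) :
    ell h γ M g μ Pmax α i a ≤ ell h γ M g μ Pmax α i b := by
  set W := wHat M g μ Pmax α i with hWdef
  have hW : 0 < W := by rw [hWdef, wHat]; positivity
  set r := Real.sqrt (2*W) with hrdef
  have hr : 0 < r := Real.sqrt_pos.2 (by linarith)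
  have hr2 : r^2 = 2*W := Real.sq_sqrt (by linarith)
  -- r = Pmax/(M*g*μ*cos)
  have hrval : r = Pmax / (M * g * μ * Real.cos (α i)) := by
    rw [hrdef, hWdef, wHat, show 2 * ((1/2) * (Pmax / (M * g * μ * Real.cos (α i)))^2)
      = (Pmax / (M * g * μ * Real.cos (α i)))^2 by ring]
    exact Real.sqrt_sq (by positivity)
  have hK : (0:ℝ) < h * Pmax / M := by positivity
  set K := h * Pmax / M with hKdef
  have hmatch : h*(g*μ*Real.cos (α i)) = K / r := by
    rw [hrval, hKdef]; field_simp; try ring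
  have h32 : (2*W) ^ ((3:ℝ)/2) = r^3 := pow_three_half _ (by linarith)
  have hA' : K / r^3 ≤ 1 - h*γ := by
    rw [h32] at hA
    have : h*(Pmax/(M*r^3)) = K/r^3 := by rw [hKdef]; field_simp; try ring
    linarith [this ▸ hA]
  have hA2 : h*(Pmax/(M*r^3)) = K/r^3 := by rw [hKdef]; field_simp; try ring
  have hβ : (0:ℝ) ≤ 1 - h*γ := by linarith
  unfold ell
  rw [← hWdef]
  by_cases hbW : b ≤ W
  · have haW : a ≤ W := le_trans hab hbW
    rw [if_pos haW, if_pos hbW]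
    nlinarith [mul_nonneg hβ (sub_nonneg.2 hab)]
  · push_neg at hbW
    rw [if_neg (not_le.2 hbW)]
    set t := Real.sqrt (2*b) with htdef
    have hbpos : 0 < b := lt_trans hW hbW
    have ht2 : t^2 = 2*b := Real.sq_sqrt (by linarith)
    have hrt : r ≤ t := Real.sqrt_le_sqrt (by linarith)
    have ht : 0 < t := lt_of_lt_of_le hr hrt
    have hpb : h*(Pmax/(M*t)) = K/t := by rw [hKdef]; field_simp; try ring
    by_cases haW : a ≤ W
    · rw [if_pos haW, hmatch, hpb]
      have := key K (1-h*γ) r r t hK hr le_rfl hrt hA'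
      rw [hr2, ht2] at this
      nlinarith [mul_nonneg hβ (sub_nonneg.2 haW)]
    · push_neg at haW
      rw [if_neg (not_le.2 haW)]
      set s := Real.sqrt (2*a) with hsdef
      have hapos : 0 < a := lt_trans hW haW
      have hs2 : s^2 = 2*a := Real.sq_sqrt (by linarith)
      have hrs : r ≤ s := Real.sqrt_le_sqrt (by linarith)
      have hst : s ≤ t := Real.sqrt_le_sqrt (by linarith)
      have hs : 0 < s := lt_of_lt_of_le hr hrs
      have hpa : h*(Pmax/(M*s)) = K/s := by rw [hKdef]; field_simp; try ring
      rw [hpa, hpb]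
      have := key K (1-h*γ) r s t hK hr hrs hst hA'
      rw [hs2, ht2] at this
      linarith

theorem stmt3 (n : ℕ) (hn : 2 ≤ n) (h M g μ γ c Pmax : ℝ)
    (hh : 0 < h) (hM : 0 < M) (hg : 0 < g) (hμ : 0 < μ)
    (hγ0 : 0 ≤ γ) (hhγ : h * γ < 1) (hc : 0 ≤ c) (hP : 0 < Pmax)
    (α : ℕ → ℝ) (hcos : ∀ i, 1 ≤ i → i ≤ n - 1 → 0 < Real.cos (α i))
    (hA : AssumptionA n h γ M g μ Pmax α)
    (win wfin : ℝ) (hwin : 0 ≤ win) (hwfin : 0 ≤ wfin)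
    (wmax : ℕ → ℝ) (hwmax1 : wmax 1 = win) (hwmaxn : wmax n = wfin)
    -- the vector u, defined recursively
    (u : ℕ → ℝ) (hu1 : u 1 = win)
    (hurec : ∀ j, 1 ≤ j → j ≤ n - 1 →
      u (j+1) = min (wmax (j+1))
        (ell h γ M g μ Pmax α j (u j) - h*g*(Real.sin (α j) + c*Real.cos (α j)))) :
    -- every w ∈ X₂ satisfies w_j ≤ u_j for all j ∈ {1,…,n}
    ∀ w : ℕ → ℝ, constrU n h γ M g μ Pmax c α w → upperBd n wmax w →
      ∀ j, 1 ≤ j → j ≤ n → w j ≤ u j := by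
  intro w hU hUB j
  induction j with
  | zero => intro h1 _; omega
  | succ j ih =>
    intro _ hle
    rcases Nat.eq_zero_or_pos j with hj0 | hj1
    · subst hj0
      simpa [hu1, ← hwmax1] using hUB 1 le_rfl (by omega)
    · have hjn : j ≤ n - 1 := by omega
      have hwu : w j ≤ u j := ih hj1 (by omega)
      have h2 := hU j hj1 hjn
      have hm := ell_mono h M g μ γ Pmax hh hM hg hμ hhγ hP α j (hcos j hj1 hjn)
        (hA j hj1 hjn) hwu
      rw [hurec j hj1 hjn]
      exact le_min (hUB (j+1) (by omega) hle) (by linarith)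
end

section
/- Define vectors l′, u′ ∈ ℝⁿ recursively by: l′_1 = w_in and l′_{j+1} = max{w^min_{j+1}, (1−hγ)·l′_j − h·g·(sin α_j + (c+μ)·cos α_j)} for j = 1,…,n−1; and u′_n = w_fin and u′_j = min{w^max_j, (u′_{j+1} + h·g·(sin α_j + (c+μ)·cos α_j))/(1−hγ)} for j = n−1 down to 1. Then every w ∈ X₃ satisfies w_j ≥ l′_j for all j ∈ {1,…,n}, and every w ∈ X₄ satisfies w_j ≤ u′_j for all j ∈ {1,…,n}. -/
theorem stmt4 (n : ℕ) (hn : 2 ≤ n) (h g μ γ c : ℝ)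
    (hh : 0 < h) (hg : 0 < g) (hμ : 0 < μ)
    (hγ0 : 0 ≤ γ) (hhγ : h * γ < 1) (hc : 0 ≤ c)
    (α : ℕ → ℝ)
    (win wfin : ℝ) (hwin : 0 ≤ win) (hwfin : 0 ≤ wfin)
    (wmax wmin : ℕ → ℝ)
    (hwmax1 : wmax 1 = win) (hwmaxn : wmax n = wfin)
    (hwmin1 : wmin 1 = win) (hwminn : wmin n = wfin)
    (hwmin0 : ∀ i, 1 < i → i < n → wmin i = 0)
    -- vector l′
    (l' : ℕ → ℝ) (hl'1 : l' 1 = win)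
    (hl'rec : ∀ j, 1 ≤ j → j ≤ n - 1 →
      l' (j+1) = max (wmin (j+1))
        ((1 - h*γ)*(l' j) - h*g*(Real.sin (α j) + (c+μ)*Real.cos (α j))))
    -- vector u′
    (u' : ℕ → ℝ) (hu'n : u' n = wfin)
    (hu'rec : ∀ j, 1 ≤ j → j ≤ n - 1 →
      u' j = min (wmax j)
        ((u' (j+1) + h*g*(Real.sin (α j) + (c+μ)*Real.cos (α j)))/(1 - h*γ))) :
    (∀ w : ℕ → ℝ, constrL n h γ g μ c α w → lowerBd n wmin w →
        ∀ j, 1 ≤ j → j ≤ n → l' j ≤ w j) ∧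
    (∀ w : ℕ → ℝ, constrL n h γ g μ c α w → upperBd n wmax w →
        ∀ j, 1 ≤ j → j ≤ n → w j ≤ u' j) := by
  have hpos : (0:ℝ) < 1 - h*γ := by linarith
  constructor
  · intro w hL hB j
    induction j with
    | zero => intro h1; omega
    | succ j ih =>
      intro h1 h2
      rcases Nat.eq_or_lt_of_le h1 with heq | hlt
      · have : j = 0 := by omega
        subst this
        rw [hl'1, ← hwmin1]
        exact hB 1 le_rfl (by omega)
      · have hj1 : 1 ≤ j := by omega
        have hjn : j ≤ n - 1 := by omega
        rw [hl'rec j hj1 hjn]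
        apply max_le
        · exact hB (j+1) (by omega) h2
        · have hlw : l' j ≤ w j := ih hj1 (by omega)
          have := hL j hj1 hjn
          nlinarith
  · intro w hL hB
    have key : ∀ d j, 1 ≤ j → j ≤ n → n - j = d → w j ≤ u' j := by
      intro d
      induction d with
      | zero =>
        intro j h1 h2 h3
        have : j = n := by omega
        rw [this, hu'n, ← hwmaxn]
        exact hB n (by omega) le_rfl
      | succ d ih =>
        intro j h1 h2 h3
        have hjn : j ≤ n - 1 := by omega
        have ih' : w (j+1) ≤ u' (j+1) := ih (j+1) (by omega) (by omega) (by omega)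
        rw [hu'rec j h1 hjn]
        apply le_min
        · exact hB j h1 h2
        · rw [le_div_iff₀ hpos]
          have := hL j h1 hjn
          nlinarith
    intro j h1 h2
    exact key (n - j) j h1 h2 rfl
end

section
/- Suppose z ∈ X₂ ∩ X₄ satisfies w ≤ z componentwise for every w ∈ X₂ ∩ X₄, and y ∈ X₁ ∩ X₃ satisfies y ≤ w componentwise for every w ∈ X₁ ∩ X₃. Then X ≠ ∅ if and only if y ≤ z componentwise. Moreover, if X ≠ ∅, then y ∈ X, z ∈ X, and every w ∈ X satisfies y ≤ w ≤ z componentwise (so z is the componentwise maximum and y the componentwise minimum of X). -/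
theorem stmt6 (n : ℕ) (hn : 2 ≤ n) (h M g μ γ c Pmax : ℝ)
    (hh : 0 < h) (hM : 0 < M) (hg : 0 < g) (hμ : 0 < μ)
    (hγ0 : 0 ≤ γ) (hhγ : h * γ < 1) (hc : 0 ≤ c) (hP : 0 < Pmax)
    (α : ℕ → ℝ) (hcos : ∀ i, 1 ≤ i → i ≤ n - 1 → 0 < Real.cos (α i))
    (win wfin : ℝ) (hwin : 0 ≤ win) (hwfin : 0 ≤ wfin)
    (wmax wmin : ℕ → ℝ)
    (hwmax1 : wmax 1 = win) (hwmaxn : wmax n = wfin)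
    (hwmin1 : wmin 1 = win) (hwminn : wmin n = wfin)
    (hwmin0 : ∀ i, 1 < i → i < n → wmin i = 0)
    -- z ∈ X₂ ∩ X₄, componentwise maximum of X₂ ∩ X₄
    (z : ℕ → ℝ)
    (hz : constrU n h γ M g μ Pmax c α z ∧ constrL n h γ g μ c α z ∧ upperBd n wmax z)
    (hzmax : ∀ w : ℕ → ℝ, constrU n h γ M g μ Pmax c α w → constrL n h γ g μ c α w →
      upperBd n wmax w → ∀ i, 1 ≤ i → i ≤ n → w i ≤ z i)
    -- y ∈ X₁ ∩ X₃, componentwise minimum of X₁ ∩ X₃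
    (y : ℕ → ℝ)
    (hy : constrU n h γ M g μ Pmax c α y ∧ constrL n h γ g μ c α y ∧ lowerBd n wmin y)
    (hymin : ∀ w : ℕ → ℝ, constrU n h γ M g μ Pmax c α w → constrL n h γ g μ c α w →
      lowerBd n wmin w → ∀ i, 1 ≤ i → i ≤ n → y i ≤ w i) :
    ((∃ w : ℕ → ℝ, memX n h γ M g μ Pmax c α wmin wmax w) ↔
        (∀ i, 1 ≤ i → i ≤ n → y i ≤ z i)) ∧
      ((∃ w : ℕ → ℝ, memX n h γ M g μ Pmax c α wmin wmax w) →
        memX n h γ M g μ Pmax c α wmin wmax y ∧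
        memX n h γ M g μ Pmax c α wmin wmax z ∧
        ∀ w : ℕ → ℝ, memX n h γ M g μ Pmax c α wmin wmax w →
          ∀ i, 1 ≤ i → i ≤ n → y i ≤ w i ∧ w i ≤ z i) := by
  obtain ⟨hzU, hzL, hzUB⟩ := hz
  obtain ⟨hyU, hyL, hyLB⟩ := hy
  constructor
  · constructor
    · rintro ⟨w, hwU, hwL, hwLB, hwUB⟩ i h1 h2
      exact le_trans (hymin w hwU hwL hwLB i h1 h2) (hzmax w hwU hwL hwUB i h1 h2)
    · intro hyz
      exact ⟨y, hyU, hyL, hyLB, fun i h1 h2 => le_trans (hyz i h1 h2) (hzUB i h1 h2)⟩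
  · rintro ⟨w, hwU, hwL, hwLB, hwUB⟩
    have hyz : ∀ i, 1 ≤ i → i ≤ n → y i ≤ z i := fun i h1 h2 =>
      le_trans (hymin w hwU hwL hwLB i h1 h2) (hzmax w hwU hwL hwUB i h1 h2)
    refine ⟨⟨hyU, hyL, hyLB, fun i h1 h2 => le_trans (hyz i h1 h2) (hzUB i h1 h2)⟩,
      ⟨hzU, hzL, fun i h1 h2 => le_trans (hyLB i h1 h2) (hyz i h1 h2), hzUB⟩, ?_⟩
    rintro v ⟨hvU, hvL, hvLB, hvUB⟩ i h1 h2
    exact ⟨hymin v hvU hvL hvLB i h1 h2, hzmax v hvU hvL hvUB i h1 h2⟩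
end

section
/- Assume Assumption (A) and suppose that for every k ≥ 1 the following hold componentwise: u^{k+1} ≤ B₁(u^k) ≤ u^k, every least element defining B₃(l^k) exists and l^k ≤ B₃(l^k) ≤ l^{k+1}, and w^min ≤ u^k and l^k ≤ w^max. Then the sequences (u^k)_{k≥1} and (l^k)_{k≥1} converge componentwise to limits ū and l̄ respectively, and: ū ∈ X₂ ∩ X₄ with w ≤ ū componentwise for every w ∈ X₂ ∩ X₄ (ū is the componentwise maximum of X₂ ∩ X₄), and l̄ ∈ X₁ ∩ X₃ with l̄ ≤ w componentwise for every w ∈ X₁ ∩ X₃ (l̄ is the componentwise minimum of X₁ ∩ X₃). -/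
noncomputable def ellF (h γ M Pmax what : ℝ) (w : ℝ) : ℝ :=
  (1 - h*γ)*w + h*(Pmax/(M*Real.sqrt (2*max w what)))

lemma wHat_pos {M g μ Pmax : ℝ} {α : ℕ → ℝ} {i : ℕ} (hM : 0 < M) (hg : 0 < g)
    (hμ : 0 < μ) (hP : 0 < Pmax) (hcos : 0 < Real.cos (α i)) :
    0 < wHat M g μ Pmax α i := by
  unfold wHat; positivity

lemma sqrt_two_wHat {M g μ Pmax : ℝ} {α : ℕ → ℝ} {i : ℕ} (hM : 0 < M) (hg : 0 < g)
    (hμ : 0 < μ) (hP : 0 < Pmax) (hcos : 0 < Real.cos (α i)) :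
    Real.sqrt (2 * wHat M g μ Pmax α i) = Pmax / (M * g * μ * Real.cos (α i)) := by
  unfold wHat
  rw [show 2 * ((1/2) * (Pmax / (M * g * μ * Real.cos (α i)))^2)
      = (Pmax / (M * g * μ * Real.cos (α i)))^2 by ring, Real.sqrt_sq (by positivity)]

lemma ell_eq_ellF {h γ M g μ Pmax : ℝ} {α : ℕ → ℝ} {i : ℕ} (hM : 0 < M) (hg : 0 < g)
    (hμ : 0 < μ) (hP : 0 < Pmax) (hcos : 0 < Real.cos (α i)) (w : ℝ) :
    ell h γ M g μ Pmax α i w = ellF h γ M Pmax (wHat M g μ Pmax α i) w := by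
  unfold ell ellF
  split_ifs with hw
  · rw [max_eq_right hw, sqrt_two_wHat hM hg hμ hP hcos]
    have hc : Real.cos (α i) ≠ 0 := ne_of_gt hcos
    field_simp
  · rw [max_eq_left (le_of_not_ge hw)]

lemma ellF_continuous {h γ M Pmax what : ℝ} (hM : 0 < M) (hwhat : 0 < what) :
    Continuous (ellF h γ M Pmax what) := by
  apply Continuous.add (by fun_prop)
  apply Continuous.mul continuous_const
  apply Continuous.div continuous_const
  · fun_prop
  · intro x
    have h1 : 0 < Real.sqrt (2 * max x what) := by
      apply Real.sqrt_pos.mpr; have := le_max_right x what; nlinarith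
    positivity

lemma key_aux {h γ M Pmax s t s0 b a : ℝ} (hh : 0 < h) (hM : 0 < M) (hP : 0 < Pmax)
    (hba : 0 ≤ b - a) (hs0p : 0 < s0) (hsp : s0 ≤ s) (hst : s ≤ t)
    (hts : t - s ≤ (b - a)/s0)
    (hA : h * (Pmax / (M * s0^3)) ≤ 1 - h*γ) :
    h*(Pmax/(M*s)) - h*(Pmax/(M*t)) ≤ (1-h*γ)*(b-a) := by
  have hsP : 0 < s := lt_of_lt_of_le hs0p hsp
  have htP : 0 < t := lt_of_lt_of_le hsP hst
  have e1 : h*(Pmax/(M*s)) - h*(Pmax/(M*t)) = h*Pmax*(t-s)/(M*s*t) := by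
    field_simp
  rw [e1]
  have hss : s0 * s0 ≤ s * t := mul_le_mul hsp (le_trans hsp hst) hs0p.le (by positivity)
  have h3 : h*Pmax*(t-s)/(M*s*t) ≤ h*Pmax*((b-a)/s0)/(M*s0*s0) := by
    apply div_le_div₀ (mul_nonneg (by positivity) (div_nonneg hba hs0p.le))
      (mul_le_mul_of_nonneg_left hts (by positivity)) (by positivity)
    nlinarith
  calc h*Pmax*(t-s)/(M*s*t) ≤ h*Pmax*((b-a)/s0)/(M*s0*s0) := h3
    _ = (h*(Pmax/(M*s0^3)))*(b-a) := by field_simp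
    _ ≤ (1-h*γ)*(b-a) := mul_le_mul_of_nonneg_right hA hba

lemma ellF_mono {h γ M Pmax what : ℝ} (hh : 0 < h) (hM : 0 < M) (hP : 0 < Pmax)
    (hwhat : 0 < what)
    (hA : h * (Pmax / (M * (2*what) ^ ((3:ℝ)/2))) ≤ 1 - h*γ) :
    Monotone (ellF h γ M Pmax what) := by
  intro a b hab
  unfold ellF
  have hba : 0 ≤ b - a := by linarith
  have hxy : max a what ≤ max b what := max_le_max hab le_rfl
  have hwx : what ≤ max a what := le_max_right _ _
  have hyx : max b what - max a what ≤ b - a := by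
    have := max_le (show b ≤ max a what + (b - a) by linarith [le_max_left a what])
      (show what ≤ max a what + (b - a) by linarith [le_max_right a what])
    linarith
  have hs0p : 0 < Real.sqrt (2*what) := Real.sqrt_pos.mpr (by linarith)
  have hsp : Real.sqrt (2*what) ≤ Real.sqrt (2*max a what) := Real.sqrt_le_sqrt (by linarith)
  have hst : Real.sqrt (2*max a what) ≤ Real.sqrt (2*max b what) := Real.sqrt_le_sqrt (by linarith)
  have hs2 : Real.sqrt (2*max a what)^2 = 2*max a what := Real.sq_sqrt (by linarith)
  have ht2 : Real.sqrt (2*max b what)^2 = 2*max b what := Real.sq_sqrt (by linarith)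
  have hs02 : Real.sqrt (2*what)^2 = 2*what := Real.sq_sqrt (by linarith)
  have hpow : (2*what) ^ ((3:ℝ)/2) = Real.sqrt (2*what)^3 := by
    rw [Real.sqrt_eq_rpow, ← Real.rpow_natCast ((2*what) ^ ((1:ℝ)/2)) 3,
      ← Real.rpow_mul (by linarith)]
    norm_num
  rw [hpow] at hA
  have hts : Real.sqrt (2*max b what) - Real.sqrt (2*max a what) ≤ (b - a)/Real.sqrt (2*what) := by
    rw [le_div_iff₀ hs0p]
    nlinarith [hsp, hst, hs0p]
  have := key_aux (γ := γ) hh hM hP hba hs0p hsp hst hts hA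
  linarith [this]


theorem stmt7 (n : ℕ) (hn : 2 ≤ n) (h M g μ γ c Pmax : ℝ)
    (hh : 0 < h) (hM : 0 < M) (hg : 0 < g) (hμ : 0 < μ)
    (hγ0 : 0 ≤ γ) (hhγ : h * γ < 1) (hc : 0 ≤ c) (hP : 0 < Pmax)
    (α : ℕ → ℝ) (hcos : ∀ i, 1 ≤ i → i ≤ n - 1 → 0 < Real.cos (α i))
    (hA : AssumptionA n h γ M g μ Pmax α)
    (win wfin : ℝ) (hwin : 0 ≤ win) (hwfin : 0 ≤ wfin)
    (wmax wmin : ℕ → ℝ)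
    (hwmax1 : wmax 1 = win) (hwmaxn : wmax n = wfin)
    (hwmin1 : wmin 1 = win) (hwminn : wmin n = wfin)
    (hwmin0 : ∀ i, 1 < i → i < n → wmin i = 0)
    -- the sequences u^k, l^k and the auxiliary vectors p^k = B₁(u^k), q^k = B₃(l^k)
    (u l p q : ℕ → ℕ → ℝ)
    (hu1 : ∀ i, 1 ≤ i → i ≤ n → u 1 i = wmax i)
    (hl1 : ∀ i, 1 ≤ i → i ≤ n → l 1 i = wmin i)
    -- p k = B₁ (u k)
    (hpB1 : ∀ k, 1 ≤ k → p k 1 = u k 1 ∧ ∀ j, 1 ≤ j → j ≤ n - 1 →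
      p k (j+1) = min (wmax (j+1))
        (ell h γ M g μ Pmax α j (p k j) - h*g*(Real.sin (α j) + c*Real.cos (α j))))
    -- u (k+1) = B₂ (p k)
    (huB2 : ∀ k, 1 ≤ k → u (k+1) n = p k n ∧ ∀ j, 1 ≤ j → j ≤ n - 1 →
      u (k+1) j = min (wmax j)
        ((u (k+1) (j+1) + h*g*(Real.sin (α j) + (c+μ)*Real.cos (α j)))/(1 - h*γ)))
    -- q k = B₃ (l k): every least element defining B₃(l^k) exists
    (hqB3 : ∀ k, 1 ≤ k → q k n = l k n ∧ ∀ j, 1 ≤ j → j ≤ n - 1 →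
      IsLeast {v : ℝ | wmin j ≤ v ∧
          q k (j+1) + h*g*(Real.sin (α j) + c*Real.cos (α j)) ≤ ell h γ M g μ Pmax α j v}
        (q k j))
    -- l (k+1) = B₄ (q k)
    (hlB4 : ∀ k, 1 ≤ k → l (k+1) 1 = q k 1 ∧ ∀ j, 1 ≤ j → j ≤ n - 1 →
      l (k+1) (j+1) = max (wmin (j+1))
        ((1 - h*γ)*(q k j) - h*g*(Real.sin (α j) + (c+μ)*Real.cos (α j))))
    -- componentwise monotonicity hypotheses: u^{k+1} ≤ B₁(u^k) ≤ u^k,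
    -- l^k ≤ B₃(l^k) ≤ l^{k+1}, w^min ≤ u^k, l^k ≤ w^max
    (hmono : ∀ k, 1 ≤ k → ∀ i, 1 ≤ i → i ≤ n →
      u (k+1) i ≤ p k i ∧ p k i ≤ u k i ∧
      l k i ≤ q k i ∧ q k i ≤ l (k+1) i ∧
      wmin i ≤ u k i ∧ l k i ≤ wmax i) :
    ∃ ubar lbar : ℕ → ℝ,
      (∀ i, 1 ≤ i → i ≤ n →
        Filter.Tendsto (fun k => u k i) Filter.atTop (nhds (ubar i))) ∧
      (∀ i, 1 ≤ i → i ≤ n →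
        Filter.Tendsto (fun k => l k i) Filter.atTop (nhds (lbar i))) ∧
      -- ū is the componentwise maximum of X₂ ∩ X₄
      (constrU n h γ M g μ Pmax c α ubar ∧ constrL n h γ g μ c α ubar ∧
        upperBd n wmax ubar) ∧
      (∀ w : ℕ → ℝ, constrU n h γ M g μ Pmax c α w → constrL n h γ g μ c α w →
        upperBd n wmax w → ∀ i, 1 ≤ i → i ≤ n → w i ≤ ubar i) ∧
      -- l̄ is the componentwise minimum of X₁ ∩ X₃
      (constrU n h γ M g μ Pmax c α lbar ∧ constrL n h γ g μ c α lbar ∧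
        lowerBd n wmin lbar) ∧
      (∀ w : ℕ → ℝ, constrU n h γ M g μ Pmax c α w → constrL n h γ g μ c α w →
        lowerBd n wmin w → ∀ i, 1 ≤ i → i ≤ n → lbar i ≤ w i) := by
  classical
  have hγ1 : 0 < 1 - h*γ := by linarith
  have hwhat : ∀ i, 1 ≤ i → i ≤ n - 1 → 0 < wHat M g μ Pmax α i :=
    fun i h1 h2 => wHat_pos hM hg hμ hP (hcos i h1 h2)
  have hAi : ∀ i, 1 ≤ i → i ≤ n - 1 →
      h * (Pmax / (M * (2 * wHat M g μ Pmax α i) ^ ((3:ℝ)/2))) ≤ 1 - h*γ := by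
    intro i h1 h2; have := hA i h1 h2; linarith
  have hellmono : ∀ i, 1 ≤ i → i ≤ n - 1 → ∀ a b : ℝ, a ≤ b →
      ell h γ M g μ Pmax α i a ≤ ell h γ M g μ Pmax α i b := by
    intro i h1 h2 a b hab
    rw [ell_eq_ellF hM hg hμ hP (hcos i h1 h2), ell_eq_ellF hM hg hμ hP (hcos i h1 h2)]
    exact ellF_mono hh hM hP (hwhat i h1 h2) (hAi i h1 h2) hab
  have hellcont : ∀ i, 1 ≤ i → i ≤ n - 1 → Continuous (ell h γ M g μ Pmax α i) := by
    intro i h1 h2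
    have : ell h γ M g μ Pmax α i = ellF h γ M Pmax (wHat M g μ Pmax α i) :=
      funext (ell_eq_ellF hM hg hμ hP (hcos i h1 h2))
    rw [this]; exact ellF_continuous hM (hwhat i h1 h2)
  -- limits
  set ubar : ℕ → ℝ := fun i => ⨅ k, u (k+1) i with hubar
  set lbar : ℕ → ℝ := fun i => ⨆ k, l (k+1) i with hlbar
  have hubd : ∀ i, 1 ≤ i → i ≤ n → BddBelow (Set.range fun k => u (k+1) i) := by
    intro i h1 h2
    exact ⟨wmin i, by rintro x ⟨k, rfl⟩; exact (hmono (k+1) (by omega) i h1 h2).2.2.2.2.1⟩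
  have hlbd : ∀ i, 1 ≤ i → i ≤ n → BddAbove (Set.range fun k => l (k+1) i) := by
    intro i h1 h2
    exact ⟨wmax i, by rintro x ⟨k, rfl⟩; exact (hmono (k+1) (by omega) i h1 h2).2.2.2.2.2⟩
  have hutend : ∀ i, 1 ≤ i → i ≤ n →
      Filter.Tendsto (fun k => u (k+1) i) Filter.atTop (nhds (ubar i)) := by
    intro i h1 h2
    exact tendsto_atTop_ciInf
      (antitone_nat_of_succ_le fun k =>
        le_trans (hmono (k+1) (by omega) i h1 h2).1 (hmono (k+1) (by omega) i h1 h2).2.1)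
      (hubd i h1 h2)
  have hltend : ∀ i, 1 ≤ i → i ≤ n →
      Filter.Tendsto (fun k => l (k+1) i) Filter.atTop (nhds (lbar i)) := by
    intro i h1 h2
    exact tendsto_atTop_ciSup
      (monotone_nat_of_le_succ fun k =>
        le_trans (hmono (k+1) (by omega) i h1 h2).2.2.1 (hmono (k+1) (by omega) i h1 h2).2.2.2.1)
      (hlbd i h1 h2)
  have hptend : ∀ i, 1 ≤ i → i ≤ n →
      Filter.Tendsto (fun k => p (k+1) i) Filter.atTop (nhds (ubar i)) := by
    intro i h1 h2
    refine tendsto_of_tendsto_of_tendsto_of_le_of_le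
      ((Filter.tendsto_add_atTop_iff_nat 1).mpr (hutend i h1 h2)) (hutend i h1 h2)
      (fun k => (hmono (k+1) (by omega) i h1 h2).1)
      (fun k => (hmono (k+1) (by omega) i h1 h2).2.1)
  have hqtend : ∀ i, 1 ≤ i → i ≤ n →
      Filter.Tendsto (fun k => q (k+1) i) Filter.atTop (nhds (lbar i)) := by
    intro i h1 h2
    refine tendsto_of_tendsto_of_tendsto_of_le_of_le (hltend i h1 h2)
      ((Filter.tendsto_add_atTop_iff_nat 1).mpr (hltend i h1 h2))
      (fun k => (hmono (k+1) (by omega) i h1 h2).2.2.1)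
      (fun k => (hmono (k+1) (by omega) i h1 h2).2.2.2.1)
  refine ⟨ubar, lbar, ?_, ?_, ⟨?_, ?_, ?_⟩, ?_, ⟨?_, ?_, ?_⟩, ?_⟩
  · -- u k i → ubar i
    intro i h1 h2
    exact (Filter.tendsto_add_atTop_iff_nat 1).mp (hutend i h1 h2)
  · intro i h1 h2
    exact (Filter.tendsto_add_atTop_iff_nat 1).mp (hltend i h1 h2)
  · -- constrU ubar
    intro i h1 h2
    have hile : i ≤ n := by omega
    have hi1le : i + 1 ≤ n := by omega
    have key : ∀ k : ℕ, ubar (i+1) ≤ ell h γ M g μ Pmax α i (p (k+1) i)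
        - h*g*(Real.sin (α i) + c*Real.cos (α i)) := by
      intro k
      have e1 : ubar (i+1) ≤ u (k+1+1) (i+1) := ciInf_le (hubd (i+1) (by omega) hi1le) (k+1)
      have e2 : u (k+1+1) (i+1) ≤ p (k+1) (i+1) := (hmono (k+1) (by omega) (i+1) (by omega) hi1le).1
      have e3 := (hpB1 (k+1) (by omega)).2 i h1 h2
      have e4 : p (k+1) (i+1) ≤ ell h γ M g μ Pmax α i (p (k+1) i)
          - h*g*(Real.sin (α i) + c*Real.cos (α i)) := by rw [e3]; exact min_le_right _ _
      linarith
    have htt : Filter.Tendsto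
        (fun k => ell h γ M g μ Pmax α i (p (k+1) i)
          - h*g*(Real.sin (α i) + c*Real.cos (α i))) Filter.atTop
        (nhds (ell h γ M g μ Pmax α i (ubar i)
          - h*g*(Real.sin (α i) + c*Real.cos (α i)))) :=
      (((hellcont i h1 h2).tendsto (ubar i)).comp (hptend i h1 hile)).sub_const _
    exact ge_of_tendsto' htt key
  · -- constrL ubar
    intro j h1 h2
    have hile : j ≤ n := by omega
    have hi1le : j + 1 ≤ n := by omega
    have key : ∀ k : ℕ, (1 - h*γ)*(u (k+1+1) j) - h*g*(Real.sin (α j) + (c+μ)*Real.cos (α j))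
        ≤ u (k+1+1) (j+1) := by
      intro k
      have e1 := (huB2 (k+1) (by omega)).2 j h1 h2
      have e2 : u (k+1+1) j ≤ (u (k+1+1) (j+1) + h*g*(Real.sin (α j) + (c+μ)*Real.cos (α j)))/(1-h*γ) := by
        rw [e1]; exact min_le_right _ _
      rw [le_div_iff₀ hγ1] at e2
      nlinarith [e2]
    refine le_of_tendsto_of_tendsto'
      ((tendsto_const_nhds.mul ((Filter.tendsto_add_atTop_iff_nat 1).mpr (hutend j h1 hile))).sub_const _)
      ((Filter.tendsto_add_atTop_iff_nat 1).mpr (hutend (j+1) (by omega) hi1le)) key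
  · -- upperBd ubar
    intro i h1 h2
    have e1 : ubar i ≤ u (0+1) i := ciInf_le (hubd i h1 h2) 0
    calc ubar i ≤ u (0+1) i := e1
      _ = wmax i := hu1 i h1 h2
  · -- maximality
    intro w hwU hwL hwub i h1 h2
    have hwu : ∀ k, ∀ i, 1 ≤ i → i ≤ n → w i ≤ u (k+1) i := by
      intro k
      induction k with
      | zero => intro i h1 h2; calc w i ≤ wmax i := hwub i h1 h2
                  _ = u (0+1) i := (hu1 i h1 h2).symm
      | succ k IH =>
        have P : ∀ j, 1 ≤ j → j ≤ n → w j ≤ p (k+1) j := by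
          intro j hj
          induction j, hj using Nat.le_induction with
          | base =>
            intro _
            rw [(hpB1 (k+1) (by omega)).1]
            exact IH 1 le_rfl (by omega)
          | succ j hj IH2 =>
            intro hjn
            have hj1 : j ≤ n - 1 := by omega
            rw [(hpB1 (k+1) (by omega)).2 j hj hj1]
            refine le_min (hwub (j+1) (by omega) hjn) ?_
            have e1 := hwU j hj hj1
            have e2 := hellmono j hj hj1 _ _ (IH2 (by omega))
            linarith
        have Q : ∀ d j, 1 ≤ j → j ≤ n → n - j ≤ d → w j ≤ u (k+1+1) j := by
          intro d
          induction d with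
          | zero =>
            intro j hj1 hjn hd
            have : j = n := by omega
            rw [this, (huB2 (k+1) (by omega)).1]
            exact P n (by omega) le_rfl
          | succ d IHd =>
            intro j hj1 hjn hd
            by_cases hje : j = n
            · rw [hje, (huB2 (k+1) (by omega)).1]
              exact P n (by omega) le_rfl
            · have hj1' : j ≤ n - 1 := by omega
              have hnext := IHd (j+1) (by omega) (by omega) (by omega)
              rw [(huB2 (k+1) (by omega)).2 j hj1 hj1']
              refine le_min (hwub j hj1 hjn) ?_
              rw [le_div_iff₀ hγ1]
              have := hwL j hj1 hj1'
              nlinarith [this, hnext]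
        intro i h1 h2
        exact Q n i h1 h2 (by omega)
    exact le_ciInf fun k => hwu k i h1 h2
  · -- constrU lbar
    intro i h1 h2
    have hile : i ≤ n := by omega
    have hi1le : i + 1 ≤ n := by omega
    have key : ∀ k : ℕ, q (k+1) (i+1) + h*g*(Real.sin (α i) + c*Real.cos (α i))
        ≤ ell h γ M g μ Pmax α i (q (k+1) i) :=
      fun k => ((hqB3 (k+1) (by omega)).2 i h1 h2).1.2
    have hle : lbar (i+1) + h*g*(Real.sin (α i) + c*Real.cos (α i))
        ≤ ell h γ M g μ Pmax α i (lbar i) := by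
      refine le_of_tendsto_of_tendsto'
        ((hqtend (i+1) (by omega) hi1le).add_const _)
        (((hellcont i h1 h2).tendsto (lbar i)).comp (hqtend i h1 hile)) key
    linarith
  · -- constrL lbar
    intro j h1 h2
    have hile : j ≤ n := by omega
    have hi1le : j + 1 ≤ n := by omega
    have key : ∀ k : ℕ, (1 - h*γ)*(q (k+1) j) - h*g*(Real.sin (α j) + (c+μ)*Real.cos (α j))
        ≤ l (k+1+1) (j+1) := by
      intro k
      rw [(hlB4 (k+1) (by omega)).2 j h1 h2]
      exact le_max_right _ _
    refine le_of_tendsto_of_tendsto'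
      ((tendsto_const_nhds.mul (hqtend j h1 hile)).sub_const _)
      ((Filter.tendsto_add_atTop_iff_nat 1).mpr (hltend (j+1) (by omega) hi1le)) key
  · -- lowerBd lbar
    intro i h1 h2
    calc wmin i = l (0+1) i := (hl1 i h1 h2).symm
      _ ≤ lbar i := le_ciSup (hlbd i h1 h2) 0
  · -- minimality
    intro w hwU hwL hwlb i h1 h2
    have hlw : ∀ k, ∀ i, 1 ≤ i → i ≤ n → l (k+1) i ≤ w i := by
      intro k
      induction k with
      | zero => intro i h1 h2; calc l (0+1) i = wmin i := hl1 i h1 h2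
                  _ ≤ w i := hwlb i h1 h2
      | succ k IH =>
        have Q : ∀ d j, 1 ≤ j → j ≤ n → n - j ≤ d → q (k+1) j ≤ w j := by
          intro d
          induction d with
          | zero =>
            intro j hj1 hjn hd
            have : j = n := by omega
            rw [this, (hqB3 (k+1) (by omega)).1]
            exact IH n (by omega) le_rfl
          | succ d IHd =>
            intro j hj1 hjn hd
            by_cases hje : j = n
            · rw [hje, (hqB3 (k+1) (by omega)).1]
              exact IH n (by omega) le_rfl
            · have hj1' : j ≤ n - 1 := by omega
              have hnext := IHd (j+1) (by omega) (by omega) (by omega)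
              refine ((hqB3 (k+1) (by omega)).2 j hj1 hj1').2 ?_
              refine ⟨hwlb j hj1 hjn, ?_⟩
              have e1 := hwU j hj1 hj1'
              linarith
        intro i hi1 hin
        induction i, hi1 using Nat.le_induction with
        | base =>
          rw [(hlB4 (k+1) (by omega)).1]
          exact Q n 1 le_rfl (by omega) (by omega)
        | succ j hj IH2 =>
          have hj1 : j ≤ n - 1 := by omega
          rw [(hlB4 (k+1) (by omega)).2 j hj hj1]
          refine max_le (hwlb (j+1) (by omega) hin) ?_
          have hq := Q n j hj (by omega) (by omega)
          have e1 := hwL j hj hj1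
          have e2 : (1-h*γ)*(q (k+1) j) ≤ (1-h*γ)*(w j) :=
            mul_le_mul_of_nonneg_left hq (le_of_lt hγ1)
          linarith
    exact ciSup_le fun k => hlw k i h1 h2
end

section
/- Fix indices j ≥ 1 and i ≥ 0 with j + i + 1 ≤ n, a starting value v ∈ ℝ, and define the null-force curve c_0 = v, c_{r+1} = (1−hγ)·c_r − h·g·(sin α_{j+r} + c·cos α_{j+r}) for r = 0,…,i−1. Suppose y_{j+r} ≤ c_r ≤ z_{j+r} for every r ∈ {0,…,i}, and suppose w̃ ∈ ℝ satisfies y_{j+i+1} ≤ w̃ ≤ z_{j+i+1}, w̃ ≤ ℓ_{j+i}(c_i) − h·g·(sin α_{j+i} + c·cos α_{j+i}), and w̃ ≥ (1−hγ)·c_i − h·g·(sin α_{j+i} + (c+μ)·cos α_{j+i}). Then the sequence of speeds w_{j+r} := c_r for r = 0,…,i together with w_{j+i+1} := w̃ satisfies, for every step r ∈ {j,…,j+i}, both constraints (U_r) and (L_r), and satisfies y_m ≤ w_m ≤ z_m for every m ∈ {j,…,j+i+1}. -/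
lemma ell_ge (h γ M g μ Pmax : ℝ)
    (hh : 0 < h) (hM : 0 < M) (hg : 0 < g) (hμ : 0 < μ) (hP : 0 < Pmax)
    (α : ℕ → ℝ) (k : ℕ) (hcos : 0 < Real.cos (α k)) (w : ℝ) :
    (1 - h*γ)*w ≤ ell h γ M g μ Pmax α k w := by
  unfold ell
  split
  · nlinarith [mul_pos hg (mul_pos hμ hcos)]
  · rename_i hgt
    have hwhat : 0 < wHat M g μ Pmax α k := by
      unfold wHat
      have : M * g * μ * Real.cos (α k) ≠ 0 := by positivity
      positivity
    have hw : 0 < w := lt_trans hwhat (lt_of_not_ge hgt)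
    have : 0 < Pmax / (M * Real.sqrt (2*w)) := by
      apply div_pos hP
      exact mul_pos hM (Real.sqrt_pos.mpr (by linarith))
    nlinarith

theorem stmt15 (n : ℕ) (hn : 2 ≤ n) (h M g μ γ c Pmax : ℝ)
    (hh : 0 < h) (hM : 0 < M) (hg : 0 < g) (hμ : 0 < μ)
    (hγ0 : 0 ≤ γ) (hhγ : h * γ < 1) (hc : 0 ≤ c) (hP : 0 < Pmax)
    (α : ℕ → ℝ) (hcos : ∀ i, 1 ≤ i → i ≤ n - 1 → 0 < Real.cos (α i))
    (y z : ℕ → ℝ)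
    (j i : ℕ) (hj : 1 ≤ j) (hji : j + i + 1 ≤ n)
    (v : ℝ)
    -- the null-force curve c_0,…,c_i
    (cseq : ℕ → ℝ) (hc0 : cseq 0 = v)
    (hcrec : ∀ r, r < i →
      cseq (r+1) = (1 - h*γ)*(cseq r) - h*g*(Real.sin (α (j+r)) + c*Real.cos (α (j+r))))
    (hcbd : ∀ r, r ≤ i → y (j+r) ≤ cseq r ∧ cseq r ≤ z (j+r))
    (wtil : ℝ)
    (hwtbd : y (j+i+1) ≤ wtil ∧ wtil ≤ z (j+i+1))
    (hwtU : wtil ≤ ell h γ M g μ Pmax α (j+i) (cseq i)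
      - h*g*(Real.sin (α (j+i)) + c*Real.cos (α (j+i))))
    (hwtL : (1 - h*γ)*(cseq i) - h*g*(Real.sin (α (j+i)) + (c+μ)*Real.cos (α (j+i)))
      ≤ wtil)
    -- the combined sequence of speeds
    (w : ℕ → ℝ) (hw1 : ∀ r, r ≤ i → w (j+r) = cseq r) (hw2 : w (j+i+1) = wtil) :
    (∀ r, j ≤ r → r ≤ j + i →
      (w (r+1) ≤ ell h γ M g μ Pmax α r (w r)
          - h*g*(Real.sin (α r) + c*Real.cos (α r)) ∧
        (1 - h*γ)*(w r) - h*g*(Real.sin (α r) + (c+μ)*Real.cos (α r)) ≤ w (r+1))) ∧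
    (∀ m, j ≤ m → m ≤ j + i + 1 → y m ≤ w m ∧ w m ≤ z m) := by
  constructor
  · intro r hr1 hr2
    obtain ⟨s, rfl⟩ := Nat.exists_eq_add_of_le hr1
    have hsle : s ≤ i := by omega
    have hcosr : 0 < Real.cos (α (j + s)) := hcos _ (by omega) (by omega)
    rcases eq_or_lt_of_le hsle with heq | hlt
    · subst heq
      have e1 : w (j + s) = cseq s := hw1 s le_rfl
      have e2 : w (j + s + 1) = wtil := hw2
      rw [e1, e2]
      exact ⟨hwtU, hwtL⟩
    · have e1 : w (j + s) = cseq s := hw1 s hsle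
      have e2 : w (j + s + 1) = cseq (s + 1) := hw1 (s+1) hlt
      rw [e1, e2, hcrec s hlt]
      have hell := ell_ge h γ M g μ Pmax hh hM hg hμ hP α (j+s) hcosr (cseq s)
      have hpos : 0 ≤ h*g*(μ*Real.cos (α (j+s))) := by positivity
      constructor
      · nlinarith
      · nlinarith
  · intro m hm1 hm2
    obtain ⟨s, rfl⟩ := Nat.exists_eq_add_of_le hm1
    rcases Nat.lt_or_ge s (i+1) with hlt | hge
    · rw [hw1 s (by omega)]
      exact hcbd s (by omega)
    · have : s = i + 1 := by omega
      subst this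
      have : j + (i + 1) = j + i + 1 := by omega
      rw [this, hw2]
      exact hwtbd
end

section
/- Fix reals h, γ ≥ 0 with hγ ≤ 1, reals g, c, slope angles, indices j ≥ 1 and s ≥ 1, and real sequences (w*_{j+r})_{r=1}^{s}, (z_{j+r})_{r=1}^{s}, (w̄_{j+r})_{r=1}^{s}. Assume: w*_{j+r} ≤ z_{j+r} for every r ∈ {1,…,s}; w*_{j+r+1} = (1−hγ)·w*_{j+r} − h·g·(sin α_{j+r} + c·cos α_{j+r}) for every r ∈ {1,…,s−1} (null-force steps); w̄_{j+1} ≥ w*_{j+1}; and w̄_{j+r} = min{ z_{j+r}, (1−hγ)·w̄_{j+r−1} − h·g·(sin α_{j+r−1} + c·cos α_{j+r−1}) } for every r ∈ {2,…,s}. Then for every r ∈ {1,…,s}: w̄_{j+r} ≥ w*_{j+r} and w̄_{j+r} − w*_{j+r} ≤ w̄_{j+1} − w*_{j+1}. -/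
theorem stmt18 (h γ g c : ℝ) (hh : 0 ≤ h) (hγ0 : 0 ≤ γ) (hhγ : h * γ ≤ 1)
    (α : ℕ → ℝ) (j s : ℕ) (hj : 1 ≤ j) (hs : 1 ≤ s)
    (ws z wb : ℕ → ℝ)
    -- w* stays below the upper profile z
    (hbd : ∀ r, 1 ≤ r → r ≤ s → ws (j+r) ≤ z (j+r))
    -- w* follows null-force steps
    (hnull : ∀ r, 1 ≤ r → r ≤ s - 1 →
      ws (j+r+1) = (1 - h*γ)*(ws (j+r)) - h*g*(Real.sin (α (j+r)) + c*Real.cos (α (j+r))))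
    -- w̄ starts above w*
    (hstart : ws (j+1) ≤ wb (j+1))
    -- recursive definition of w̄
    (hrec : ∀ r, 2 ≤ r → r ≤ s →
      wb (j+r) = min (z (j+r))
        ((1 - h*γ)*(wb (j+r-1))
          - h*g*(Real.sin (α (j+r-1)) + c*Real.cos (α (j+r-1))))) :
    ∀ r, 1 ≤ r → r ≤ s →
      ws (j+r) ≤ wb (j+r) ∧ wb (j+r) - ws (j+r) ≤ wb (j+1) - ws (j+1) := by
  intro r
  induction r with
  | zero => intro h1; omega
  | succ r ih =>
    intro _ hr1
    rcases Nat.eq_or_lt_of_le (Nat.one_le_iff_ne_zero.mpr (Nat.succ_ne_zero r)) with he | hlt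
    · obtain rfl : r = 0 := by omega
      exact ⟨hstart, le_refl _⟩
    · have hr : 1 ≤ r := by omega
      have hrs : r ≤ s := by omega
      obtain ⟨ih1, ih2⟩ := ih hr hrs
      have hrecr := hrec (r+1) (by omega) hr1
      have hidx : j + (r+1) - 1 = j + r := by omega
      rw [hidx] at hrecr
      have hnullr := hnull r hr (by omega)
      have hfac : 0 ≤ 1 - h*γ := by linarith
      have hmul : (1 - h*γ)*(ws (j+r)) ≤ (1 - h*γ)*(wb (j+r)) :=
        mul_le_mul_of_nonneg_left ih1 hfac
      have hws : ws (j+(r+1)) = (1 - h*γ)*(ws (j+r))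
          - h*g*(Real.sin (α (j+r)) + c*Real.cos (α (j+r))) := by
        rw [show j+(r+1) = j+r+1 by omega]; exact hnullr
      constructor
      · rw [hrecr, le_min_iff]
        exact ⟨hbd (r+1) (by omega) hr1, by rw [hws]; linarith⟩
      · have : wb (j+(r+1)) ≤ (1 - h*γ)*(wb (j+r))
            - h*g*(Real.sin (α (j+r)) + c*Real.cos (α (j+r))) := by
          rw [hrecr]; exact min_le_right _ _
        have hd : wb (j+(r+1)) - ws (j+(r+1)) ≤ (1 - h*γ)*(wb (j+r) - ws (j+r)) := by
          rw [hws]; nlinarith [hmul, this]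
        have hnn : 0 ≤ wb (j+r) - ws (j+r) := by linarith
        have : (1 - h*γ)*(wb (j+r) - ws (j+r)) ≤ wb (j+r) - ws (j+r) := by nlinarith [mul_nonneg (mul_nonneg hh hγ0) hnn]
        linarith
end

section
/- Fix reals h, γ ≥ 0 with hγ ≤ 1, reals g, c, slope angles, indices j ≥ 1 and s ≥ 1, and real sequences (w*_{j+r})_{r=1}^{s}, (y_{j+r})_{r=1}^{s}, (w̄_{j+r})_{r=1}^{s}. Assume: w*_{j+r} ≥ y_{j+r} for every r ∈ {1,…,s}; w*_{j+r+1} = (1−hγ)·w*_{j+r} − h·g·(sin α_{j+r} + c·cos α_{j+r}) for every r ∈ {1,…,s−1} (null-force steps); w̄_{j+1} ≤ w*_{j+1}; and w̄_{j+r} = max{ y_{j+r}, (1−hγ)·w̄_{j+r−1} − h·g·(sin α_{j+r−1} + c·cos α_{j+r−1}) } for every r ∈ {2,…,s}. Then for every r ∈ {1,…,s}: w̄_{j+r} ≤ w*_{j+r} and w*_{j+r} − w̄_{j+r} ≤ w*_{j+1} − w̄_{j+1}. -/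
theorem stmt19 (h γ g c : ℝ) (hh : 0 ≤ h) (hγ0 : 0 ≤ γ) (hhγ : h * γ ≤ 1)
    (α : ℕ → ℝ) (j s : ℕ) (hj : 1 ≤ j) (hs : 1 ≤ s)
    (ws y wb : ℕ → ℝ)
    -- w* stays above the lower profile y
    (hbd : ∀ r, 1 ≤ r → r ≤ s → y (j+r) ≤ ws (j+r))
    -- w* follows null-force steps
    (hnull : ∀ r, 1 ≤ r → r ≤ s - 1 →
      ws (j+r+1) = (1 - h*γ)*(ws (j+r)) - h*g*(Real.sin (α (j+r)) + c*Real.cos (α (j+r))))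
    -- w̄ starts below w*
    (hstart : wb (j+1) ≤ ws (j+1))
    -- recursive definition of w̄
    (hrec : ∀ r, 2 ≤ r → r ≤ s →
      wb (j+r) = max (y (j+r))
        ((1 - h*γ)*(wb (j+r-1))
          - h*g*(Real.sin (α (j+r-1)) + c*Real.cos (α (j+r-1))))) :
    ∀ r, 1 ≤ r → r ≤ s →
      wb (j+r) ≤ ws (j+r) ∧ ws (j+r) - wb (j+r) ≤ ws (j+1) - wb (j+1) := by
  intro r
  induction r with
  | zero => intro h1 _; omega
  | succ n ih =>
    intro h1 h2
    rcases Nat.lt_or_ge n 1 with hl | hn1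
    · have hn0 : n = 0 := by omega
      subst hn0
      exact ⟨hstart, le_refl _⟩
    · have hns : n ≤ s := by omega
      obtain ⟨ih1, ih2⟩ := ih (by omega) hns
      have hrec' := hrec (n+1) (by omega) h2
      have hnull' := hnull n hn1 (by omega)
      have hsub : j + (n+1) - 1 = j + n := by omega
      have hadd : j + (n+1) = j + n + 1 := by omega
      rw [hsub] at hrec'
      rw [hadd] at hrec' ⊢
      rw [hrec']
      have hk : 0 ≤ 1 - h*γ := by linarith
      set e := h*g*(Real.sin (α (j+n)) + c*Real.cos (α (j+n))) with he
      constructor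
      · apply max_le
        · have := hbd (n+1) (by omega) h2
          rw [hadd] at this
          exact this
        · rw [hnull']
          nlinarith [mul_le_mul_of_nonneg_left ih1 hk]
      · have hge : (1-h*γ)*(wb (j+n)) - e ≤ max (y (j+n+1)) ((1-h*γ)*(wb (j+n)) - e) :=
          le_max_right _ _
        rw [hnull']
        nlinarith [hge, mul_le_mul_of_nonneg_right (show (1 - h*γ) ≤ 1 by nlinarith) (sub_nonneg.2 ih1)]
end
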